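/- arXiv:2309.08678 — 2 statements merged into one kernel-verified Lean document; each statement's English description precedes it below -/
import Mathlib

section
/- Let ε > 0 be a real number and C ≥ 2 a natural number, and let P be the C×C randomized response distortion matrix with entries e^ε/(C−1+e^ε) on the diagonal and 1/(C−1+e^ε) off the diagonal. Let q ∈ ℝ^C be a probability vector (nonnegative entries summing to 1) representing the true label distribution, and for any probability vector r let rᵀP denote the vector with v-th entry Σ_u r_u P_{u v}, which is the distribution of the noisy label when the clean label is drawn from r. Then for every probability vector q' ∈ ℝ^C, the forward-corrected expected cross-entropy loss under the noisy label distribution satisfies −Σ_v (qᵀP)_v · log((q'ᵀP)_v) ≥ −Σ_v (qᵀP)_v · log((qᵀP)_v), with equality if and only if q' = q. In particular, the forward-corrected expected loss is minimized over probability vectors exactly at the true distribution q. -/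
/-!
Under randomized response the noisy distribution of a clean distribution `r` is the affine image
`v ↦ β + (α - β) * r v` with `β = 1 / (C - 1 + e^ε) > 0` and `α - β > 0`. So the noisy vectors of
`q` and `q'` are strictly positive with the same total mass, Gibbs' inequality (the per-term gap is
`b * klFun (a / b) ≥ 0`) gives the bound with equality iff they coincide, and the affine map is
injective.
-/

open Real Finset InformationTheory

lemma mul_klFun_div {a b : ℝ} (ha : 0 < a) (hb : 0 < b) :
    b * klFun (a / b) = a * log a - a * log b + (b - a) := by
  rw [klFun_apply, log_div ha.ne' hb.ne']
  field_simp
  ring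

lemma mul_klFun_div_nonneg {a b : ℝ} (ha : 0 < a) (hb : 0 < b) : 0 ≤ b * klFun (a / b) :=
  mul_nonneg hb.le (klFun_nonneg (div_pos ha hb).le)

section Gibbs

variable {ι : Type*} [Fintype ι] {a b : ι → ℝ}

lemma sum_mul_log_sub_sum_mul_log_eq_sum_mul_klFun (ha : ∀ i, 0 < a i) (hb : ∀ i, 0 < b i)
    (hab : ∑ i, a i = ∑ i, b i) :
    ∑ i, a i * log (a i) - ∑ i, a i * log (b i) = ∑ i, b i * klFun (a i / b i) := by
  simp only [mul_klFun_div (ha _) (hb _), sum_add_distrib, sum_sub_distrib, hab]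
  ring

theorem sum_mul_log_le_sum_mul_log (ha : ∀ i, 0 < a i) (hb : ∀ i, 0 < b i)
    (hab : ∑ i, a i = ∑ i, b i) :
    ∑ i, a i * log (b i) ≤ ∑ i, a i * log (a i) := by
  have := sum_mul_log_sub_sum_mul_log_eq_sum_mul_klFun ha hb hab
  linarith [sum_nonneg fun i (_ : i ∈ univ) => mul_klFun_div_nonneg (ha i) (hb i)]

theorem sum_mul_log_eq_sum_mul_log_iff (ha : ∀ i, 0 < a i) (hb : ∀ i, 0 < b i)
    (hab : ∑ i, a i = ∑ i, b i) :
    ∑ i, a i * log (b i) = ∑ i, a i * log (a i) ↔ b = a := by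
  rw [eq_comm, ← sub_eq_zero, sum_mul_log_sub_sum_mul_log_eq_sum_mul_klFun ha hb hab,
    sum_eq_zero_iff_of_nonneg fun i _ => mul_klFun_div_nonneg (ha i) (hb i), funext_iff]
  refine forall_congr' fun i => ?_
  rw [mul_eq_zero, or_iff_right (hb i).ne', klFun_eq_zero_iff (div_pos (ha i) (hb i)).le,
    div_eq_one_iff_eq (hb i).ne', eq_comm]
  exact imp_iff_right (mem_univ i)

end Gibbs

section RandomizedResponse

variable {ι : Type*} [Fintype ι] [DecidableEq ι] {P : ι → ι → ℝ} {α β : ℝ}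

lemma sum_mul_eq_of_forall_eq_ite (hP : ∀ u v, P u v = if u = v then α else β) {r : ι → ℝ}
    (hr : ∑ u, r u = 1) (v : ι) :
    ∑ u, r u * P u v = β + (α - β) * r v := by
  have (u : ι) : r u * P u v = β * r u + if u = v then (α - β) * r u else 0 := by
    rw [hP]; split_ifs <;> ring
  simp only [this, sum_add_distrib, ← mul_sum, hr, sum_ite_eq', mem_univ, if_true, mul_one]

end RandomizedResponse

theorem flc_minimizer_general (ε : ℝ) (hε : 0 < ε) (C : ℕ)
    (P : Fin C → Fin C → ℝ)
    (hP : ∀ u v : Fin C,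
      P u v = if u = v then Real.exp ε / ((C : ℝ) - 1 + Real.exp ε)
              else 1 / ((C : ℝ) - 1 + Real.exp ε))
    (q : Fin C → ℝ) (hq : ∀ v, 0 ≤ q v) (hqsum : ∑ v, q v = 1) :
    ∀ q' : Fin C → ℝ, (∀ v, 0 ≤ q' v) → (∑ v, q' v = 1) →
      (-∑ v, (∑ u, q u * P u v) * Real.log (∑ u, q' u * P u v) ≥
        -∑ v, (∑ u, q u * P u v) * Real.log (∑ u, q u * P u v)) ∧
      ((-∑ v, (∑ u, q u * P u v) * Real.log (∑ u, q' u * P u v) =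
        -∑ v, (∑ u, q u * P u v) * Real.log (∑ u, q u * P u v)) ↔ q' = q) := by
  intro q' hq' hq'sum
  have hexp : 1 < exp ε := one_lt_exp_iff.mpr hε
  set D := (C : ℝ) - 1 + exp ε
  have hD : 0 < D := by linarith [(Nat.cast_nonneg C : (0 : ℝ) ≤ C)]
  have hγ : 0 < exp ε / D - 1 / D := by
    rw [← sub_div]
    exact div_pos (by linarith) hD
  have hpos (r : Fin C → ℝ) (hr : ∀ v, 0 ≤ r v) (v : Fin C) :
      0 < 1 / D + (exp ε / D - 1 / D) * r v :=
    add_pos_of_pos_of_nonneg (by positivity) (mul_nonneg hγ.le (hr v))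
  have hsum : ∑ v, (1 / D + (exp ε / D - 1 / D) * q v) =
      ∑ v, (1 / D + (exp ε / D - 1 / D) * q' v) := by
    simp only [sum_add_distrib, ← mul_sum, hqsum, hq'sum]
  simp only [sum_mul_eq_of_forall_eq_ite hP hqsum, sum_mul_eq_of_forall_eq_ite hP hq'sum]
  refine ⟨neg_le_neg (sum_mul_log_le_sum_mul_log (hpos q hq) (hpos q' hq') hsum), ?_⟩
  rw [neg_inj, sum_mul_log_eq_sum_mul_log_iff (hpos q hq) (hpos q' hq') hsum]
  simp only [funext_iff, add_right_inj, mul_right_inj' hγ.ne']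

/-- Forward loss correction: the forward-corrected expected cross-entropy loss
under the noisy label distribution is minimized exactly at the true clean
distribution `q`. -/
theorem flc_minimizer (ε : ℝ) (hε : 0 < ε) (C : ℕ) (hC : 2 ≤ C)
    (P : Fin C → Fin C → ℝ)
    (hP : ∀ u v : Fin C,
      P u v = if u = v then Real.exp ε / ((C : ℝ) - 1 + Real.exp ε)
              else 1 / ((C : ℝ) - 1 + Real.exp ε))
    (q : Fin C → ℝ) (hq : ∀ v, 0 ≤ q v) (hqsum : ∑ v, q v = 1) :
    ∀ q' : Fin C → ℝ, (∀ v, 0 ≤ q' v) → (∑ v, q' v = 1) →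
      (-∑ v, (∑ u, q u * P u v) * Real.log (∑ u, q' u * P u v) ≥
        -∑ v, (∑ u, q u * P u v) * Real.log (∑ u, q u * P u v)) ∧
      ((-∑ v, (∑ u, q u * P u v) * Real.log (∑ u, q' u * P u v) =
        -∑ v, (∑ u, q u * P u v) * Real.log (∑ u, q u * P u v)) ↔ q' = q) :=
  flc_minimizer_general ε hε C P hP q hq hqsum
end

section
/- Let ε > 0 be a real number and C ≥ 2 a natural number, and let P be the C×C randomized response distortion matrix with entries e^ε/(C−1+e^ε) on the diagonal and 1/(C−1+e^ε) off the diagonal. Let q ∈ ℝ^C be a probability vector with all entries strictly positive (the true label distribution), let w ∈ [0,1] represent the fraction of non-perturbed data, and for a probability vector r let rᵀP denote the vector with v-th entry Σ_u r_u P_{u v}. Then for every probability vector q' ∈ ℝ^C with all entries strictly positive, the adjusted forward-corrected expected loss satisfies w · (−Σ_v q_v log q'_v) + (1−w) · (−Σ_v (qᵀP)_v log((q'ᵀP)_v)) ≥ w · (−Σ_v q_v log q_v) + (1−w) · (−Σ_v (qᵀP)_v log((qᵀP)_v)), with equality if and only if q' = q. In particular, the minimizer of the adjusted forward-corrected loss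 — which applies the standard cross-entropy loss on the clean fraction w of the data and the P-corrected cross-entropy loss on the noisy fraction 1−w — coincides with the minimizer of the original cross-entropy loss under the fully clean distribution, which is the content of the paper's Theorem 1. -/
/-!
Both terms are Kullback–Leibler divergences in disguise: by Gibbs' inequality the cross entropy
of `p` against `r` is at least the entropy of `p`, with equality only at `r = p`. For the noisy
term apply this to `qᵀP` and `q'ᵀP`: the randomized response matrix sends `r` to
`(∑ r + (e^ε - 1) r) / (C - 1 + e^ε)`, an injective map taking positive probability vectors to
positive probability vectors. A convex combination of two nonnegative gaps that vanish exactly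
at `q' = q` vanishes exactly there as well.
-/

open Finset Real Matrix

section Gibbs

variable {ι : Type*} [Fintype ι]

noncomputable def crossEntropy (p r : ι → ℝ) : ℝ := -∑ i, p i * log (r i)

lemma mul_log_div_le_sub {p r : ℝ} (hp : 0 < p) (hr : 0 < r) : p * log (r / p) ≤ r - p := by
  have h := mul_le_mul_of_nonneg_left (log_le_sub_one_of_pos (div_pos hr hp)) hp.le
  rwa [mul_sub, mul_div_cancel₀ _ hp.ne', mul_one] at h

lemma mul_log_div_eq_sub_iff {p r : ℝ} (hp : 0 < p) (hr : 0 < r) :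
    p * log (r / p) = r - p ↔ r = p := by
  refine ⟨fun h => ?_, fun h => by simp [h, hp.ne']⟩
  by_contra hne
  have hlt := mul_lt_mul_of_pos_left
    (log_lt_sub_one_of_pos (div_pos hr hp) (div_ne_one_of_ne hne)) hp
  rw [mul_sub, mul_div_cancel₀ _ hp.ne', mul_one] at hlt
  exact hlt.ne h

lemma crossEntropy_sub_crossEntropy_self {p r : ι → ℝ} (hp : ∀ i, 0 < p i)
    (hr : ∀ i, 0 < r i) :
    crossEntropy p r - crossEntropy p p = -∑ i, p i * log (r i / p i) := by
  simp only [crossEntropy, log_div (hr _).ne' (hp _).ne', mul_sub, sum_sub_distrib]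
  ring

lemma crossEntropy_self_le {p r : ι → ℝ} (hp : ∀ i, 0 < p i) (hr : ∀ i, 0 < r i)
    (hsum : ∑ i, r i = ∑ i, p i) : crossEntropy p p ≤ crossEntropy p r := by
  have h : ∑ i, p i * log (r i / p i) ≤ ∑ i, (r i - p i) :=
    sum_le_sum fun i _ => mul_log_div_le_sub (hp i) (hr i)
  rw [sum_sub_distrib, hsum, sub_self] at h
  linarith [crossEntropy_sub_crossEntropy_self hp hr]

lemma crossEntropy_eq_self_iff {p r : ι → ℝ} (hp : ∀ i, 0 < p i) (hr : ∀ i, 0 < r i)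
    (hsum : ∑ i, r i = ∑ i, p i) : crossEntropy p r = crossEntropy p p ↔ r = p := by
  have hgap : crossEntropy p r = crossEntropy p p ↔
      ∑ i, p i * log (r i / p i) = ∑ i, (r i - p i) := by
    rw [sum_sub_distrib, hsum, sub_self, ← sub_eq_zero,
      crossEntropy_sub_crossEntropy_self hp hr, neg_eq_zero]
  rw [hgap, sum_eq_sum_iff_of_le fun i _ => mul_log_div_le_sub (hp i) (hr i), funext_iff]
  exact forall_congr' fun i => by simpa using mul_log_div_eq_sub_iff (hp i) (hr i)

end Gibbs

lemma vecMul_ite_eq {n : Type*} [Fintype n] [DecidableEq n] (r : n → ℝ) (a b : ℝ) (v : n) :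
    (r ᵥ* fun u v => if u = v then a else b) v = b * ∑ u, r u + (a - b) * r v := by
  have hentry : ∀ u,
      r u * (if u = v then a else b) = b * r u + if u = v then (a - b) * r v else 0 := by
    intro u
    split_ifs with h
    · subst h; ring
    · ring
  simp only [vecMul, dotProduct, hentry, sum_add_distrib, ← mul_sum, sum_ite_eq', mem_univ,
    if_true]

section RandomizedResponse

variable {C : ℕ} {ε : ℝ}

noncomputable def randomizedResponse (C : ℕ) (ε : ℝ) : Matrix (Fin C) (Fin C) ℝ :=
  fun u v => if u = v then exp ε / ((C : ℝ) - 1 + exp ε) else 1 / ((C : ℝ) - 1 + exp ε)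

lemma natCast_sub_one_add_exp_pos (C : ℕ) (hε : 0 < ε) : 0 < (C : ℝ) - 1 + exp ε := by
  have := add_one_lt_exp hε.ne'
  have : (0 : ℝ) ≤ C := C.cast_nonneg
  linarith

lemma vecMul_randomizedResponse (r : Fin C → ℝ) (v : Fin C) :
    (r ᵥ* randomizedResponse C ε) v =
      (∑ u, r u + (exp ε - 1) * r v) / ((C : ℝ) - 1 + exp ε) := by
  unfold randomizedResponse
  rw [vecMul_ite_eq]
  ring

lemma sum_vecMul_randomizedResponse (hε : 0 < ε) (r : Fin C → ℝ) :
    ∑ v, (r ᵥ* randomizedResponse C ε) v = ∑ v, r v := by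
  have hD := (natCast_sub_one_add_exp_pos C hε).ne'
  simp only [vecMul_randomizedResponse, ← sum_div, sum_add_distrib, ← mul_sum, sum_const,
    card_univ, Fintype.card_fin, nsmul_eq_mul]
  field_simp
  ring

lemma vecMul_randomizedResponse_pos (hε : 0 < ε) {r : Fin C → ℝ} (hr : ∀ v, 0 < r v)
    (v : Fin C) : 0 < (r ᵥ* randomizedResponse C ε) v := by
  have hgain : 0 < exp ε - 1 := by linarith [add_one_lt_exp hε.ne']
  rw [vecMul_randomizedResponse]
  exact div_pos (add_pos_of_nonneg_of_pos (sum_nonneg fun u _ => (hr u).le)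
    (mul_pos hgain (hr v))) (natCast_sub_one_add_exp_pos C hε)

lemma vecMul_randomizedResponse_injective (hε : 0 < ε) :
    Function.Injective fun r : Fin C → ℝ => r ᵥ* randomizedResponse C ε := by
  intro r s h
  have hsum : ∑ v, r v = ∑ v, s v := by
    rw [← sum_vecMul_randomizedResponse hε r, ← sum_vecMul_randomizedResponse hε s]
    exact congrArg (fun t => ∑ v, t v) h
  have hgain : exp ε - 1 ≠ 0 := by linarith [add_one_lt_exp hε.ne']
  funext v
  have hv := congrFun h v
  simp only [vecMul_randomizedResponse, hsum] at hv
  rw [div_left_inj' (natCast_sub_one_add_exp_pos C hε).ne', add_right_inj] at hv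
  exact mul_left_cancel₀ hgain hv

end RandomizedResponse

lemma convex_combination_le_and_eq_iff {w x x' y y' : ℝ} {Q : Prop} (hw0 : 0 ≤ w)
    (hw1 : w ≤ 1) (hx : x ≤ x') (hy : y ≤ y') (hxQ : x' = x ↔ Q) (hyQ : y' = y ↔ Q) :
    w * x + (1 - w) * y ≤ w * x' + (1 - w) * y' ∧
      (w * x' + (1 - w) * y' = w * x + (1 - w) * y ↔ Q) := by
  have hx' : 0 ≤ w * (x' - x) := mul_nonneg hw0 (sub_nonneg.2 hx)
  have hy' : 0 ≤ (1 - w) * (y' - y) := mul_nonneg (sub_nonneg.2 hw1) (sub_nonneg.2 hy)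
  refine ⟨by linarith, fun h => ?_, fun hQ => by rw [hxQ.2 hQ, hyQ.2 hQ]⟩
  rcases hw0.eq_or_lt with rfl | hw
  · exact hyQ.1 (by linarith)
  · have hx0 : w * (x' - x) = 0 := by linarith
    exact hxQ.1 (sub_eq_zero.1 ((mul_eq_zero.1 hx0).resolve_left hw.ne'))

theorem adjusted_flc_minimizer_general (ε : ℝ) (hε : 0 < ε) (C : ℕ)
    (P : Fin C → Fin C → ℝ)
    (hP : ∀ u v : Fin C,
      P u v = if u = v then Real.exp ε / ((C : ℝ) - 1 + Real.exp ε)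
              else 1 / ((C : ℝ) - 1 + Real.exp ε))
    (q : Fin C → ℝ) (hq : ∀ v, 0 < q v) (hqsum : ∑ v, q v = 1)
    (w : ℝ) (hw0 : 0 ≤ w) (hw1 : w ≤ 1) :
    ∀ q' : Fin C → ℝ, (∀ v, 0 < q' v) → (∑ v, q' v = 1) →
      (w * (-∑ v, q v * Real.log (q' v)) +
          (1 - w) * (-∑ v, (∑ u, q u * P u v) * Real.log (∑ u, q' u * P u v)) ≥
        w * (-∑ v, q v * Real.log (q v)) +
          (1 - w) * (-∑ v, (∑ u, q u * P u v) * Real.log (∑ u, q u * P u v))) ∧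
      ((w * (-∑ v, q v * Real.log (q' v)) +
          (1 - w) * (-∑ v, (∑ u, q u * P u v) * Real.log (∑ u, q' u * P u v)) =
        w * (-∑ v, q v * Real.log (q v)) +
          (1 - w) * (-∑ v, (∑ u, q u * P u v) * Real.log (∑ u, q u * P u v))) ↔
        q' = q) := by
  intro q' hq' hq'sum
  obtain rfl : P = randomizedResponse C ε := funext₂ hP
  have hsum : ∑ v, q' v = ∑ v, q v := hq'sum.trans hqsum.symm
  have hnoisySum :
      ∑ v, (q' ᵥ* randomizedResponse C ε) v = ∑ v, (q ᵥ* randomizedResponse C ε) v := by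
    simp only [sum_vecMul_randomizedResponse hε, hsum]
  have hnoisyPos {r : Fin C → ℝ} (hr : ∀ v, 0 < r v) :=
    vecMul_randomizedResponse_pos hε hr
  exact convex_combination_le_and_eq_iff hw0 hw1
    (crossEntropy_self_le hq hq' hsum)
    (crossEntropy_self_le (hnoisyPos hq) (hnoisyPos hq') hnoisySum)
    (crossEntropy_eq_self_iff hq hq' hsum)
    ((crossEntropy_eq_self_iff (hnoisyPos hq) (hnoisyPos hq') hnoisySum).trans
      (vecMul_randomizedResponse_injective hε).eq_iff)

/-- Adjusted forward loss correction (paper's Theorem 1): with a clean fraction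
`w` of the data receiving the standard cross-entropy loss and the noisy fraction
`1 - w` receiving the `P`-corrected cross-entropy loss, the adjusted
forward-corrected expected loss is minimized exactly at the true distribution `q`. -/
theorem adjusted_flc_minimizer (ε : ℝ) (hε : 0 < ε) (C : ℕ) (hC : 2 ≤ C)
    (P : Fin C → Fin C → ℝ)
    (hP : ∀ u v : Fin C,
      P u v = if u = v then Real.exp ε / ((C : ℝ) - 1 + Real.exp ε)
              else 1 / ((C : ℝ) - 1 + Real.exp ε))
    (q : Fin C → ℝ) (hq : ∀ v, 0 < q v) (hqsum : ∑ v, q v = 1)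
    (w : ℝ) (hw0 : 0 ≤ w) (hw1 : w ≤ 1) :
    ∀ q' : Fin C → ℝ, (∀ v, 0 < q' v) → (∑ v, q' v = 1) →
      (w * (-∑ v, q v * Real.log (q' v)) +
          (1 - w) * (-∑ v, (∑ u, q u * P u v) * Real.log (∑ u, q' u * P u v)) ≥
        w * (-∑ v, q v * Real.log (q v)) +
          (1 - w) * (-∑ v, (∑ u, q u * P u v) * Real.log (∑ u, q u * P u v))) ∧
      ((w * (-∑ v, q v * Real.log (q' v)) +
          (1 - w) * (-∑ v, (∑ u, q u * P u v) * Real.log (∑ u, q' u * P u v)) =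
        w * (-∑ v, q v * Real.log (q v)) +
          (1 - w) * (-∑ v, (∑ u, q u * P u v) * Real.log (∑ u, q u * P u v))) ↔
        q' = q) :=
  adjusted_flc_minimizer_general ε hε C P hP q hq hqsum w hw0 hw1
end
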